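/- arXiv:2105.04989 — 2 statements merged into one kernel-verified Lean document; each statement's English description precedes it below -/
import Mathlib

section
/- (B. H. Neumann's lemma, separation form) Let G be a group acting on a set X, and let L ⊆ X be a finite set such that every element of L has infinite orbit under G. Then for every finite set E ⊆ X there exists g ∈ G with g·L ∩ E = ∅. -/
/-!
If every translate `g • L` met `E`, then `G` would be covered by the finitely many transporter
sets `{g | g • ℓ = e}` with `ℓ ∈ L`, `e ∈ E`. Each of them lies in a left coset of the stabilizer
of `ℓ`, whose index is the size of the orbit of `ℓ` and hence infinite. This contradicts
B. H. Neumann's lemma: a group covered by finitely many left cosets of subgroups has one of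
these subgroups of finite index.
-/

open scoped Pointwise

namespace MulAction

variable {G X : Type*} [Group G] [MulAction G X]

theorem not_finiteIndex_stabilizer_of_orbit_infinite {x : X} (h : (orbit G x).Infinite) :
    ¬(stabilizer G x).FiniteIndex := fun hfi =>
  hfi.index_ne_zero (by rw [index_stabilizer, h.ncard])

theorem exists_setOf_smul_eq_subset_leftCoset (x y : X) :
    ∃ c : G, {g : G | g • x = y} ⊆ c • (stabilizer G x : Set G) := by
  by_cases hy : ∃ c : G, c • x = y
  · obtain ⟨c, rfl⟩ := hy
    refine ⟨c, fun g (hg : g • x = c • x) => ?_⟩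
    rw [mem_leftCoset_iff, SetLike.mem_coe, mem_stabilizer_iff, mul_smul, hg, inv_smul_smul]
  · exact ⟨1, fun g hg => (hy ⟨g, hg⟩).elim⟩

end MulAction

open MulAction in
theorem neumann_separation {G X : Type*} [Group G] [MulAction G X]
    (L E : Set X) (hL : L.Finite) (hE : E.Finite)
    (horb : ∀ ℓ ∈ L, (MulAction.orbit G ℓ).Infinite) :
    ∃ g : G, Disjoint ((g • ·) '' L) E := by
  by_contra! hmeet
  choose c hc using fun p : X × X => exists_setOf_smul_eq_subset_leftCoset (G := G) p.1 p.2
  have hcovers :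
      ⋃ p ∈ hL.toFinset ×ˢ hE.toFinset, c p • (stabilizer G p.1 : Set G) = Set.univ := by
    refine Set.eq_univ_of_forall fun g => ?_
    obtain ⟨_, ⟨ℓ, hℓ, rfl⟩, he⟩ := Set.not_disjoint_iff.mp (hmeet g)
    exact Set.mem_biUnion (x := (ℓ, g • ℓ)) (by simp [hℓ, he]) (hc (ℓ, g • ℓ) rfl)
  obtain ⟨p, hp, hfi⟩ := Subgroup.exists_finiteIndex_of_leftCoset_cover hcovers
  have hpL : p.1 ∈ L := by simpa using (Finset.mem_product.mp hp).1
  exact not_finiteIndex_stabilizer_of_orbit_infinite (horb p.1 hpL) hfi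
end

section
/- (B. H. Neumann's lemma, disjointness form) Let G be a group acting on a set X and let L ⊆ X be a finite set all of whose elements have infinite G-orbits. Then there exists an infinite sequence (g_j) in G such that g_i·L ∩ g_j·L = ∅ for all i ≠ j. -/
/-!
If the translates of a finite set `L` could not avoid a finite set `E`, then `G` would be covered
by the finitely many sets `{g | g • ℓ = y}` with `ℓ ∈ L`, `y ∈ E`, each of which is empty or a
left coset of the stabilizer of `ℓ`. By Neumann's coset-covering lemma one of these stabilizers
has finite index, i.e. some `ℓ ∈ L` has a finite orbit. So a translate of `L` avoids any finite
union of earlier translates, and the sequence is built greedily.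
-/

open Pointwise

namespace MulAction

variable {G X : Type*} [Group G] [MulAction G X]

theorem finite_orbit_of_finiteIndex_stabilizer (x : X) [(stabilizer G x).FiniteIndex] :
    (orbit G x).Finite :=
  have := Finite.of_equiv _ (orbitEquivQuotientStabilizer G x).symm
  Set.toFinite _

theorem mem_leftCoset_stabilizer_of_smul_eq {g k : G} {x : X} (h : g • x = k • x) :
    k ∈ g • (stabilizer G x : Set G) := by
  rw [mem_leftCoset_iff, SetLike.mem_coe, mem_stabilizer_iff, mul_smul, inv_smul_eq_iff, h]

theorem exists_smul_image_disjoint {L E : Set X} (hL : L.Finite) (hE : E.Finite)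
    (horb : ∀ ℓ ∈ L, (orbit G ℓ).Infinite) :
    ∃ g : G, Disjoint ((g • ·) '' L) E := by
  by_contra! hmeet
  let w : X × X → G := fun p => Classical.epsilon fun g => g • p.1 = p.2
  have hcover : ⋃ p ∈ hL.toFinset ×ˢ hE.toFinset, w p • (stabilizer G p.1 : Set G) = .univ := by
    refine Set.eq_univ_of_forall fun k => ?_
    obtain ⟨_, ⟨ℓ, hℓ, rfl⟩, hkℓ⟩ := Set.not_disjoint_iff.mp (hmeet k)
    have hw : w (ℓ, k • ℓ) • ℓ = k • ℓ :=
      Classical.epsilon_spec (p := fun g => g • ℓ = k • ℓ) ⟨k, rfl⟩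
    exact Set.mem_biUnion (by simp [hℓ, hkℓ]) (mem_leftCoset_stabilizer_of_smul_eq hw)
  obtain ⟨p, hp, hfin⟩ := Subgroup.exists_finiteIndex_of_leftCoset_cover hcover
  exact horb p.1 (hL.mem_toFinset.mp (Finset.mem_product.mp hp).1)
    (finite_orbit_of_finiteIndex_stabilizer p.1)

end MulAction

theorem neumann_disjoint_sequence {G X : Type*} [Group G] [MulAction G X]
    (L : Set X) (hL : L.Finite)
    (horb : ∀ ℓ ∈ L, (MulAction.orbit G ℓ).Infinite) :
    ∃ g : ℕ → G, ∀ i j : ℕ, i ≠ j →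
      Disjoint ((g i • ·) '' L) ((g j • ·) '' L) := by
  let r : G → G → Prop := fun g h => Disjoint ((g • ·) '' L) ((h • ·) '' L)
  have : Std.Symm r := ⟨fun _ _ h => h.symm⟩
  obtain ⟨g, -, hg⟩ := exists_seq_of_forall_finset_exists' (fun _ => True) r fun s _ => by
    obtain ⟨y, hy⟩ := MulAction.exists_smul_image_disjoint hL
      (s.finite_toSet.biUnion fun x _ => hL.image (x • ·)) horb
    exact ⟨y, trivial, fun x hx => (hy.mono_right (Set.subset_biUnion_of_mem hx)).symm⟩
  exact ⟨g, fun _ _ => @hg _ _⟩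
end
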